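/- arXiv:2405.03285 — 3 statements merged into one kernel-verified Lean document; each statement's English description precedes it below -/
import Mathlib

section
/- Let H be a nontrivial complex Hilbert space and R : H → H a nonzero compact bounded linear operator. Then ‖R‖² is an eigenvalue of the self-adjoint operator T = R*∘R, i.e., there exists x ≠ 0 with R*(R x) = ‖R‖² · x, and moreover every real number λ in the spectrum of T satisfies λ ≤ ‖R‖²; hence the supremum of the spectrum of T equals ‖R‖² and is attained as the largest eigenvalue of T. -/
open ContinuousLinearMap

local notation "⟪" x ", " y "⟫" => @inner ℂ _ _ x y

private lemma key_estimate {H : Type*} [NormedAddCommGroup H] [InnerProductSpace ℂ H]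
    [CompleteSpace H] (R : H →L[ℂ] H) (y : H) (hy : ‖y‖ = 1) :
    ‖(adjoint R ∘L R) y - ((‖R‖ : ℂ) ^ 2) • y‖ ^ 2
      ≤ 2 * ‖R‖ ^ 2 * (‖R‖ ^ 2 - ‖R y‖ ^ 2) := by
  set T := adjoint R ∘L R with hT
  have h1 : ⟪T y, y⟫ = ⟪R y, R y⟫ := by
    rw [hT, ContinuousLinearMap.comp_apply, adjoint_inner_left]
  have h2 : Complex.re ⟪T y, y⟫ = ‖R y‖ ^ 2 := by
    rw [h1]; exact_mod_cast inner_self_eq_norm_sq (𝕜 := ℂ) (R y)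
  have h3 : ‖T y‖ ≤ ‖R‖ ^ 2 := by
    calc ‖T y‖ ≤ ‖T‖ * ‖y‖ := T.le_opNorm y
    _ = ‖R‖ ^ 2 := by rw [hy, mul_one, hT, norm_adjoint_comp_self, sq]
  have h4 : ‖((‖R‖ : ℂ) ^ 2) • y‖ = ‖R‖ ^ 2 := by
    rw [norm_smul, hy, mul_one, norm_pow, Complex.norm_real, Real.norm_eq_abs,
      abs_of_nonneg (norm_nonneg R)]
  have h5 : Complex.re ⟪T y, ((‖R‖ : ℂ) ^ 2) • y⟫ = ‖R‖ ^ 2 * ‖R y‖ ^ 2 := by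
    rw [inner_smul_right]
    have heq : ((‖R‖ : ℂ) ^ 2) = ((‖R‖ ^ 2 : ℝ) : ℂ) := by push_cast; ring
    rw [heq]
    simp only [Complex.mul_re, Complex.ofReal_re, Complex.ofReal_im, zero_mul, sub_zero]
    rw [h2]
  have hexp := norm_sub_sq (𝕜 := ℂ) (T y) (((‖R‖ : ℂ) ^ 2) • y)
  have hRy : ‖R y‖ ≤ ‖R‖ := by
    calc ‖R y‖ ≤ ‖R‖ * ‖y‖ := R.le_opNorm y
    _ = ‖R‖ := by rw [hy, mul_one]
  have hTy0 : (0:ℝ) ≤ ‖T y‖ := norm_nonneg _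
  simp only [RCLike.re_to_complex] at hexp
  rw [hexp, h5, h4]
  nlinarith [sq_nonneg (‖T y‖ - ‖R‖ ^ 2), norm_nonneg (R y), norm_nonneg R]

/-- For a nonzero compact operator `R` on a nontrivial complex Hilbert
space, `‖R‖²` is an eigenvalue of `T = R* ∘ R`, every real spectral value of `T` is
at most `‖R‖²`, and the supremum of the real spectrum of `T` equals `‖R‖²`. -/
theorem norm_sq_is_largest_eigenvalue_of_adjoint_comp_self
    (H : Type*) [NormedAddCommGroup H] [InnerProductSpace ℂ H] [CompleteSpace H]
    [Nontrivial H]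
    (R : H →L[ℂ] H) (hR : IsCompactOperator R) (hR0 : R ≠ 0) :
    (∃ x : H, x ≠ 0 ∧ adjoint R (R x) = ((‖R‖ : ℂ) ^ 2) • x) ∧
    (∀ lam ∈ spectrum ℝ (adjoint R ∘L R), lam ≤ ‖R‖ ^ 2) ∧
    sSup (spectrum ℝ (adjoint R ∘L R)) = ‖R‖ ^ 2 := by
  have hn : (0:ℝ) < ‖R‖ := norm_pos_iff.mpr hR0
  set T := adjoint R ∘L R with hTdef
  set c : ℂ := (‖R‖ : ℂ) ^ 2 with hc
  have hc0 : c ≠ 0 := by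
    simp only [hc]
    intro h
    have := pow_eq_zero_iff (n := 2) (by norm_num) |>.mp h
    simp only [Complex.ofReal_eq_zero] at this
    exact hn.ne' this
  -- Step 1: maximizing sequence of unit vectors
  have hseq : ∀ k : ℕ, ∃ y : H, ‖y‖ = 1 ∧ ‖R‖ - 1/(k+1) ≤ ‖R y‖ := by
    intro k
    rcases lt_or_ge (‖R‖ - 1/(k+1)) 0 with h | h
    · obtain ⟨y, hy⟩ := exists_norm_eq H (zero_le_one (α := ℝ))
      exact ⟨y, hy, le_trans h.le (norm_nonneg _)⟩
    · have hlt : ‖R‖ - 1/(k+1) < ‖R‖ := by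
        have : (0:ℝ) < 1/(k+1) := by positivity
        linarith
      obtain ⟨x, hx1, hx2⟩ := R.exists_lt_apply_of_lt_opNorm hlt
      have hRx : (0:ℝ) < ‖R x‖ := lt_of_le_of_lt h hx2
      have hx0 : x ≠ 0 := by
        intro h0; rw [h0, map_zero, norm_zero] at hRx; exact lt_irrefl _ hRx
      have hnx : (0:ℝ) < ‖x‖ := norm_pos_iff.mpr hx0
      have hcoef : ‖((‖x‖ : ℂ))⁻¹‖ = ‖x‖⁻¹ := by
        rw [norm_inv, Complex.norm_real, Real.norm_eq_abs, abs_of_pos hnx]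
      have h1le : 1 ≤ ‖x‖⁻¹ := by
        nlinarith [inv_mul_cancel₀ hnx.ne', inv_pos.mpr hnx]
      refine ⟨((‖x‖ : ℂ))⁻¹ • x, ?_, ?_⟩
      · rw [norm_smul, hcoef, inv_mul_cancel₀ hnx.ne']
      · rw [map_smul, norm_smul, hcoef]
        nlinarith [norm_nonneg (R x)]
  choose y hy1 hy2 using hseq
  -- ‖R (y k)‖ → ‖R‖
  have hRy_le : ∀ k, ‖R (y k)‖ ≤ ‖R‖ := fun k => by
    calc ‖R (y k)‖ ≤ ‖R‖ * ‖y k‖ := R.le_opNorm _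
    _ = ‖R‖ := by rw [hy1, mul_one]
  have hRy_tendsto : Filter.Tendsto (fun k => ‖R (y k)‖) Filter.atTop (nhds ‖R‖) := by
    have hlow : Filter.Tendsto (fun k : ℕ => ‖R‖ - 1/(k+1)) Filter.atTop (nhds ‖R‖) := by
      have := tendsto_one_div_add_atTop_nhds_zero_nat (𝕜 := ℝ)
      have h2 := Filter.Tendsto.sub (tendsto_const_nhds (x := ‖R‖)) this
      simpa using h2
    exact tendsto_of_tendsto_of_tendsto_of_le_of_le hlow tendsto_const_nhds
      (fun k => hy2 k) (fun k => hRy_le k)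
  -- ‖T (y k) - c • y k‖ → 0
  have hdiff : Filter.Tendsto (fun k => T (y k) - c • y k) Filter.atTop (nhds 0) := by
    rw [tendsto_zero_iff_norm_tendsto_zero]
    have hsq : Filter.Tendsto (fun k => ‖T (y k) - c • y k‖ ^ 2) Filter.atTop (nhds 0) := by
      have hub : Filter.Tendsto (fun k => 2 * ‖R‖ ^ 2 * (‖R‖ ^ 2 - ‖R (y k)‖ ^ 2))
          Filter.atTop (nhds 0) := by
        have h1 : Filter.Tendsto (fun k => ‖R (y k)‖ ^ 2) Filter.atTop (nhds (‖R‖ ^ 2)) :=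
          hRy_tendsto.pow 2
        have h2 := (tendsto_const_nhds (x := ‖R‖ ^ 2)).sub h1
        have h3 := h2.const_mul (2 * ‖R‖ ^ 2)
        simpa using h3
      refine tendsto_of_tendsto_of_tendsto_of_le_of_le tendsto_const_nhds hub
        (fun k => sq_nonneg _) (fun k => key_estimate R (y k) (hy1 k))
    have := hsq.sqrt
    simpa [Real.sqrt_sq (norm_nonneg _)] using this
  -- Step 2: compactness of T and convergent subsequence
  have hTc : IsCompactOperator (T : H → H) := by
    have : IsCompactOperator ((adjoint R) ∘ (R : H → H)) :=
      hR.continuous_comp (adjoint R).continuous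
    simp only [hTdef, ContinuousLinearMap.coe_comp']
    exact this
  have hK : IsCompact (closure (T '' Metric.closedBall 0 1)) :=
    IsCompactOperator.isCompact_closure_image_closedBall (𝕜₁ := ℂ)
      (f := (T : H →ₗ[ℂ] H)) hTc 1
  have hmem : ∀ k, T (y k) ∈ closure (T '' Metric.closedBall 0 1) := fun k =>
    subset_closure ⟨y k, by simp [Metric.mem_closedBall, (hy1 k).le], rfl⟩
  obtain ⟨z, _, φ, hφmono, hφtend⟩ := hK.tendsto_subseq hmem
  have hφatTop : Filter.Tendsto φ Filter.atTop Filter.atTop := hφmono.tendsto_atTop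
  -- c • y (φ k) → z
  have hcy : Filter.Tendsto (fun k => c • y (φ k)) Filter.atTop (nhds z) := by
    have h1 : Filter.Tendsto (fun k => T (y (φ k)) - c • y (φ k)) Filter.atTop (nhds 0) :=
      hdiff.comp hφatTop
    have := hφtend.sub h1
    simpa using this
  -- y (φ k) → x := c⁻¹ • z
  set x : H := c⁻¹ • z with hx
  have hytend : Filter.Tendsto (fun k => y (φ k)) Filter.atTop (nhds x) := by
    have := hcy.const_smul (c⁻¹)
    simpa [smul_smul, inv_mul_cancel₀ hc0] using this
  have hxnorm : ‖x‖ = 1 := by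
    have h1 : Filter.Tendsto (fun k => ‖y (φ k)‖) Filter.atTop (nhds ‖x‖) := hytend.norm
    have h2 : Filter.Tendsto (fun k => ‖y (φ k)‖) Filter.atTop (nhds 1) := by
      simp only [hy1]
      exact tendsto_const_nhds
    exact tendsto_nhds_unique h1 h2
  have hx0 : x ≠ 0 := by
    intro h; rw [h, norm_zero] at hxnorm; norm_num at hxnorm
  have hTx : T x = c • x := by
    have h1 : Filter.Tendsto (fun k => T (y (φ k))) Filter.atTop (nhds (T x)) :=
      (T.continuous.tendsto x).comp hytend
    have h2 : T x = z := tendsto_nhds_unique h1 hφtend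
    rw [h2, hx, smul_smul, mul_inv_cancel₀ hc0, one_smul]
  have heig : adjoint R (R x) = c • x := by
    rw [← hTx]; rfl
  -- Part 2: spectral bound
  have hbound : ∀ lam ∈ spectrum ℝ T, lam ≤ ‖R‖ ^ 2 := by
    intro lam hlam
    have h1 : ‖lam‖ ≤ ‖T‖ := spectrum.norm_le_norm_of_mem hlam
    have h2 : ‖T‖ = ‖R‖ ^ 2 := by rw [hTdef, norm_adjoint_comp_self, sq]
    calc lam ≤ |lam| := le_abs_self lam
    _ = ‖lam‖ := (Real.norm_eq_abs lam).symm
    _ ≤ ‖R‖ ^ 2 := h2 ▸ h1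
  -- Part 3: ‖R‖² ∈ spectrum
  have hspec : (‖R‖ ^ 2 : ℝ) ∈ spectrum ℝ T := by
    rw [spectrum.mem_iff]
    intro hunit
    have happ : (algebraMap ℝ (H →L[ℂ] H) (‖R‖ ^ 2) - T) x = 0 := by
      rw [Algebra.algebraMap_eq_smul_one]
      have h1 : ((‖R‖ ^ 2 : ℝ) • (1 : H →L[ℂ] H) - T) x = (‖R‖ ^ 2 : ℝ) • x - T x := by
        simp
      rw [h1, hTx]
      have : (‖R‖ ^ 2 : ℝ) • x = c • x := by
        rw [hc]
        norm_cast
      rw [this, sub_self]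
    set B := hunit.unit with hB
    have hBx : (B : H →L[ℂ] H) x = 0 := by
      rw [hB, IsUnit.unit_spec]; exact happ
    have : x = 0 := by
      have h1 : ((B⁻¹ : (H →L[ℂ] H)ˣ) : H →L[ℂ] H) ((B : H →L[ℂ] H) x) = x := by
        rw [← ContinuousLinearMap.mul_apply, Units.inv_mul, ContinuousLinearMap.one_apply]
      rw [hBx, map_zero] at h1
      exact h1.symm
    exact hx0 this
  -- Conclusion
  refine ⟨⟨x, hx0, heig⟩, hbound, ?_⟩
  refine le_antisymm (csSup_le ⟨_, hspec⟩ hbound) (le_csSup ⟨‖R‖ ^ 2, hbound⟩ hspec)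
end

section
/- Let H be a nontrivial complex Hilbert space, K : H → H a compact bounded linear operator, c ∈ ℂ, and set R = K + c·I and T = R*∘R. Let s = sup of the real spectrum of T. If s ≠ |c|², then s is an eigenvalue of T, i.e., there exists x ≠ 0 with T x = s · x. -/
open ContinuousLinearMap

open scoped InnerProductSpace ComplexConjugate ENNReal NNReal

lemma my_adjoint_isCompactOperator {H : Type*} [NormedAddCommGroup H] [InnerProductSpace ℂ H]
    [CompleteSpace H] (K : H →L[ℂ] H) (hK : IsCompactOperator K) :
    IsCompactOperator (ContinuousLinearMap.adjoint K) := by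
  set A := ContinuousLinearMap.adjoint K with hAdef
  have hKA : IsCompactOperator ⇑((K ∘L A).toLinearMap) := by
    simpa using hK.comp_clm A
  have hS : TotallyBounded (⇑(K ∘L A) '' Metric.closedBall (0:H) 1) := by
    have := IsCompactOperator.isCompact_closure_image_closedBall (𝕜₁ := ℂ) (𝕜₂ := ℂ)
      (f := (K ∘L A).toLinearMap) hKA 1
    exact (this.totallyBounded.subset subset_closure).subset (fun z hz => hz)
  have hTB : TotallyBounded (⇑A '' Metric.closedBall (0:H) 1) := by
    rw [Metric.totallyBounded_iff]
    intro ε hε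
    have hδ : (0:ℝ) < ε ^ 2 / 4 := by positivity
    obtain ⟨t, htS, htfin, hcover⟩ :=
      totallyBounded_iff_subset.mp hS _ (Metric.dist_mem_uniformity hδ)
    choose! xf hxf1 hxf2 using fun y (hy : y ∈ ⇑(K ∘L A) '' Metric.closedBall (0:H) 1) => hy
    refine ⟨(fun y => A (xf y)) '' t, htfin.image _, ?_⟩
    rintro - ⟨z, hz, rfl⟩
    obtain ⟨y, hyt, hyd⟩ := Set.mem_iUnion₂.mp (hcover ⟨z, hz, rfl⟩)
    have hyS := htS hyt
    have hx1 := hxf1 y hyS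
    have hx2 := hxf2 y hyS
    refine Set.mem_iUnion₂.mpr ⟨A (xf y), Set.mem_image_of_mem _ hyt, ?_⟩
    rw [Metric.mem_ball, dist_eq_norm]
    have hsub : A z - A (xf y) = A (z - xf y) := by rw [map_sub]
    set w := z - xf y with hw
    have hwnorm : ‖w‖ ≤ 2 := by
      have h1 : ‖z‖ ≤ 1 := mem_closedBall_zero_iff.mp hz
      have h2 : ‖xf y‖ ≤ 1 := mem_closedBall_zero_iff.mp hx1
      calc ‖w‖ ≤ ‖z‖ + ‖xf y‖ := norm_sub_le _ _
        _ ≤ 2 := by linarith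
    have hKAw : ‖K (A w)‖ < ε ^ 2 / 4 := by
      have : K (A w) = (K ∘L A) z - y := by
        rw [← hx2]; simp [hw, map_sub]
      rw [this, ← dist_eq_norm]
      exact hyd
    have hsq : ‖A w‖ ^ 2 < ε ^ 2 := by
      have h1 : (‖A w‖:ℝ) ^ 2 = Complex.re ⟪A w, A w⟫_ℂ := by
        have := inner_self_eq_norm_sq (𝕜 := ℂ) (x := A w)
        simpa using this.symm
      have h2 : ⟪A w, A w⟫_ℂ = ⟪w, K (A w)⟫_ℂ := adjoint_inner_left K (A w) w
      have h3 : Complex.re ⟪w, K (A w)⟫_ℂ ≤ ‖⟪w, K (A w)⟫_ℂ‖ := Complex.re_le_norm _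
      have h4 : ‖⟪w, K (A w)⟫_ℂ‖ ≤ ‖w‖ * ‖K (A w)‖ := norm_inner_le_norm _ _
      have h5 : ‖w‖ * ‖K (A w)‖ < ε ^ 2 := by nlinarith [norm_nonneg w, norm_nonneg (K (A w))]
      calc ‖A w‖ ^ 2 = Complex.re ⟪w, K (A w)⟫_ℂ := by rw [h1, h2]
        _ ≤ ‖⟪w, K (A w)⟫_ℂ‖ := h3
        _ ≤ ‖w‖ * ‖K (A w)‖ := h4
        _ < ε ^ 2 := h5
    rw [hsub]
    exact lt_of_pow_lt_pow_left₀ 2 hε.le hsq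
  have hcl : IsCompact (closure (⇑(A.toLinearMap) '' Metric.closedBall (0:H) 1)) := by
    refine TotallyBounded.isCompact_of_isClosed ?_ isClosed_closure
    exact (by simpa using hTB : TotallyBounded (⇑(A.toLinearMap) '' Metric.closedBall (0:H) 1)).closure
  have := (isCompactOperator_iff_isCompact_closure_image_closedBall
      (A.toLinearMap) (one_pos)).mpr hcl
  simpa using this


/-- If `K` is compact, `R = K + c·I`, `T = R* ∘ R`, and the supremum `s`
of the real spectrum of `T` satisfies `s ≠ |c|²`, then `s` is an eigenvalue of `T`. -/
theorem sSup_spectrum_is_eigenvalue_of_compact_plus_scalar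
    (H : Type*) [NormedAddCommGroup H] [InnerProductSpace ℂ H] [CompleteSpace H]
    [Nontrivial H]
    (K : H →L[ℂ] H) (hK : IsCompactOperator K) (c : ℂ)
    (R : H →L[ℂ] H) (hR : R = K + c • (1 : H →L[ℂ] H))
    (T : H →L[ℂ] H) (hT : T = adjoint R ∘L R)
    (s : ℝ) (hs : s = sSup (spectrum ℝ T)) (hsc : s ≠ ‖c‖ ^ 2) :
    ∃ x : H, x ≠ 0 ∧ T x = ((s : ℂ)) • x := by
  have hTstar : T = star R * R := by rw [hT, star_eq_adjoint]; rfl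
  have hsa : IsSelfAdjoint T := hTstar ▸ IsSelfAdjoint.star_mul_self R
  have hpos : (0 : H →L[ℂ] H) ≤ T := hTstar ▸ star_mul_self_nonneg R
  have hnontriv : Nontrivial (H →L[ℂ] H) := ⟨1, 0, by
    intro h
    obtain ⟨x, hx⟩ := exists_ne (0 : H)
    exact hx (by simpa using DFunLike.congr_fun h x)⟩
  have hne : (spectrum ℝ T).Nonempty := by
    obtain ⟨z, hz⟩ := spectrum.nonempty T
    refine ⟨z.re, spectrum.of_algebraMap_mem ℂ ?_⟩
    have := hsa.mem_spectrum_eq_re hz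
    simpa [← this] using hz
  have hcpt : IsCompact (spectrum ℝ T) := spectrum.isCompact T
  have hsmem : s ∈ spectrum ℝ T := hs ▸ hcpt.sSup_mem hne
  have hs0 : 0 ≤ s := spectrum_nonneg_of_nonneg hpos hsmem
  have hub : ∀ r ∈ spectrum ℝ T, r ≤ s := fun r hr => hs ▸ le_csSup hcpt.bddAbove hr
  have hradius : spectralRadius ℝ T = ENNReal.ofReal s := by
    apply le_antisymm
    · refine iSup₂_le fun r hr => ?_
      have h0 : 0 ≤ r := spectrum_nonneg_of_nonneg hpos hr
      rw [← enorm_eq_nnnorm, Real.enorm_eq_ofReal h0]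
      exact ENNReal.ofReal_le_ofReal (hub r hr)
    · have h := le_iSup₂ (f := fun (k : ℝ) (_ : k ∈ spectrum ℝ T) => (‖k‖₊ : ℝ≥0∞)) s hsmem
      rw [← Real.enorm_eq_ofReal hs0]
      exact h
  have hTnorm : ‖T‖ = s := by
    have h1 : spectralRadius ℝ T = spectralRadius ℂ T := hsa.spectrumRestricts.spectralRadius_eq
    have h2 : spectralRadius ℂ T = ‖T‖₊ := hsa.spectralRadius_eq_nnnorm
    have h3 : (‖T‖₊ : ℝ≥0∞) = ENNReal.ofReal s := by rw [← h2, ← h1, hradius]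
    have h4 := congrArg ENNReal.toReal h3
    simpa [ENNReal.toReal_ofReal hs0] using h4
  by_cases hs0' : s = 0
  · have hT0 : T = 0 := norm_eq_zero.mp (by rw [hTnorm, hs0'])
    obtain ⟨x, hx⟩ := exists_ne (0 : H)
    exact ⟨x, hx, by simp [hT0, hs0']⟩
  have hspos : 0 < s := lt_of_le_of_ne hs0 (Ne.symm hs0')
  have hRR : ‖R‖ * ‖R‖ = s := by rw [← norm_adjoint_comp_self R, ← hT, hTnorm]
  have hRpos : 0 < ‖R‖ := by nlinarith [norm_nonneg R]
  obtain ⟨v, -, hvlt, hvtend⟩ := exists_seq_strictMono_tendsto ‖R‖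
  set v' : ℕ → ℝ := fun n => max (v n) 0 with hv'def
  have hv'lt : ∀ n, v' n < ‖R‖ := fun n => max_lt (hvlt n) hRpos
  have hv'0 : ∀ n, 0 ≤ v' n := fun n => le_max_right _ _
  have hv'tend : Filter.Tendsto v' Filter.atTop (nhds ‖R‖) := by
    have h := hvtend.max (tendsto_const_nhds (x := (0:ℝ)))
    simpa [max_eq_left hRpos.le] using h
  have hex : ∀ n, ∃ uu : H, ‖uu‖ = 1 ∧ v' n < ‖R uu‖ := by
    intro n
    obtain ⟨x, hx1, hx2⟩ := R.exists_lt_apply_of_lt_opNorm (hv'lt n)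
    have hx0 : x ≠ 0 := by
      rintro rfl
      simp only [map_zero, norm_zero] at hx2
      exact absurd hx2 (not_lt.mpr (hv'0 n))
    have hxpos : 0 < ‖x‖ := norm_pos_iff.mpr hx0
    refine ⟨((‖x‖ : ℂ))⁻¹ • x, ?_, ?_⟩
    · rw [norm_smul, norm_inv, Complex.norm_real, Real.norm_of_nonneg (norm_nonneg x)]
      field_simp
    · rw [map_smul, norm_smul, norm_inv, Complex.norm_real,
        Real.norm_of_nonneg (norm_nonneg x)]
      have h1 : (1:ℝ) ≤ ‖x‖⁻¹ := (one_le_inv₀ hxpos).mpr hx1.le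
      calc v' n < ‖R x‖ := hx2
        _ = 1 * ‖R x‖ := (one_mul _).symm
        _ ≤ ‖x‖⁻¹ * ‖R x‖ := mul_le_mul_of_nonneg_right h1 (norm_nonneg _)
  choose u hu1 hu2 using hex
  have huRle : ∀ n, ‖R (u n)‖ ≤ ‖R‖ := fun n => R.unit_le_opNorm (u n) (hu1 n).le
  have hRu : Filter.Tendsto (fun n => ‖R (u n)‖) Filter.atTop (nhds ‖R‖) :=
    tendsto_of_tendsto_of_tendsto_of_le_of_le hv'tend tendsto_const_nhds
      (fun n => (hu2 n).le) huRle
  have ha : Filter.Tendsto (fun n => ‖R (u n)‖ ^ 2) Filter.atTop (nhds s) := by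
    have h := hRu.mul hRu
    rw [hRR] at h
    simpa [pow_two] using h
  set q : ℕ → H := fun n => T (u n) - (s : ℂ) • u n with hqdef
  have hqb : ∀ n, ‖q n‖ ^ 2 ≤ 2 * s * (s - ‖R (u n)‖ ^ 2) := by
    intro n
    have hinner : ⟪T (u n), u n⟫_ℂ = ⟪R (u n), R (u n)⟫_ℂ := by
      rw [hT, ContinuousLinearMap.comp_apply]; exact adjoint_inner_left R (u n) (R (u n))
    have hre : Complex.re ⟪T (u n), u n⟫_ℂ = ‖R (u n)‖ ^ 2 := by
      rw [hinner]; simpa using inner_self_eq_norm_sq (𝕜 := ℂ) (x := R (u n))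
    have hTn : ‖T (u n)‖ ≤ s := by
      rw [← hTnorm]; exact T.unit_le_opNorm (u n) (hu1 n).le
    have hexp := norm_sub_sq (𝕜 := ℂ) (T (u n)) ((s:ℂ) • u n)
    have hsm : Complex.re ⟪T (u n), (s:ℂ) • u n⟫_ℂ = s * ‖R (u n)‖ ^ 2 := by
      rw [inner_smul_right, ← hre]
      simp [Complex.re_ofReal_mul]
    have hnorms : ‖(s:ℂ) • u n‖ = s := by
      rw [norm_smul, Complex.norm_real, Real.norm_of_nonneg hs0, hu1 n, mul_one]
    calc ‖q n‖ ^ 2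
        = ‖T (u n)‖^2 - 2 * Complex.re ⟪T (u n), (s:ℂ) • u n⟫_ℂ + ‖(s:ℂ) • u n‖^2 := by
          exact hexp
      _ ≤ s^2 - 2*(s * ‖R (u n)‖^2) + s^2 := by
          rw [hsm, hnorms]
          nlinarith [norm_nonneg (T (u n)), hTn]
      _ = 2 * s * (s - ‖R (u n)‖ ^ 2) := by ring
  have hq0 : Filter.Tendsto q Filter.atTop (nhds 0) := by
    rw [tendsto_zero_iff_norm_tendsto_zero]
    have hb : Filter.Tendsto (fun n => 2 * s * (s - ‖R (u n)‖ ^ 2)) Filter.atTop (nhds 0) := by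
      have h := (tendsto_const_nhds (x := (2*s)) (f := Filter.atTop (α := ℕ))).mul
        ((tendsto_const_nhds (x := s)).sub ha)
      simpa using h
    have hsqrt : Filter.Tendsto (fun n => Real.sqrt (2 * s * (s - ‖R (u n)‖ ^ 2)))
        Filter.atTop (nhds 0) := by
      have h := (Real.continuous_sqrt.tendsto 0).comp hb
      simpa [Function.comp_def] using h
    refine squeeze_zero (fun n => norm_nonneg _) (fun n => ?_) hsqrt
    have h1 : ‖q n‖ = Real.sqrt (‖q n‖ ^ 2) := by
      rw [Real.sqrt_sq (norm_nonneg _)]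
    rw [h1]
    exact Real.sqrt_le_sqrt (hqb n)
  -- the compact perturbation
  set C : H →L[ℂ] H := T - ((‖c‖^2 : ℝ) : ℂ) • 1 with hCdef
  have hCeq : C = star K * K + (conj c) • K + c • star K := by
    rw [hCdef, hTstar, hR, star_add, star_smul, star_one]
    simp only [RCLike.star_def, add_mul, mul_add, smul_mul_assoc, mul_smul_comm, mul_one,
      one_mul, smul_smul, smul_add]
    have hcc : c * conj c = ((‖c‖^2 : ℝ) : ℂ) := by
      simpa [mul_comm] using RCLike.conj_mul c
    rw [hcc]
    abel
  have hadj : IsCompactOperator ⇑(ContinuousLinearMap.adjoint K) :=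
    my_adjoint_isCompactOperator K hK
  have hC : IsCompactOperator ⇑C := by
    have h1 : IsCompactOperator (⇑(ContinuousLinearMap.adjoint K) ∘ ⇑K) :=
      hK.continuous_comp (ContinuousLinearMap.adjoint K).continuous
    have h3 : IsCompactOperator ((conj c) • ⇑K) := hK.smul (conj c)
    have h2 : IsCompactOperator (c • ⇑(ContinuousLinearMap.adjoint K)) := hadj.smul c
    have h := (h1.add h3).add h2
    have hfun : ⇑C = ((⇑(ContinuousLinearMap.adjoint K) ∘ ⇑K) + (conj c) • ⇑K)
        + c • ⇑(ContinuousLinearMap.adjoint K) := by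
      funext z
      simp [hCeq, star_eq_adjoint, ContinuousLinearMap.mul_apply]
    rw [hfun]
    exact h
  have hC1 : IsCompactOperator ⇑(C.toLinearMap) := by simpa using hC
  obtain ⟨Kset, hKset, hKsub⟩ := hC1.image_closedBall_subset_compact (𝕜₁ := ℂ) 1
  have hmem : ∀ n, C (u n) ∈ Kset := fun n =>
    hKsub ⟨u n, by simp [mem_closedBall_zero_iff, (hu1 n).le], rfl⟩
  obtain ⟨y, -, φ, hφ, hy⟩ := hKset.tendsto_subseq hmem
  set d : ℝ := s - ‖c‖^2 with hddef
  have hd : ((d:ℝ):ℂ) ≠ 0 := by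
    simp only [ne_eq, Complex.ofReal_eq_zero, hddef]
    exact sub_ne_zero.mpr hsc
  have hCu : ∀ n, C (u n) = q n + ((d:ℝ):ℂ) • u n := by
    intro n
    simp only [hCdef, hqdef, ContinuousLinearMap.sub_apply, ContinuousLinearMap.smul_apply,
      ContinuousLinearMap.one_apply, hddef, Complex.ofReal_sub, Complex.ofReal_pow, sub_smul]
    abel
  have hqφ : Filter.Tendsto (fun n => q (φ n)) Filter.atTop (nhds 0) :=
    hq0.comp hφ.tendsto_atTop
  have hux : Filter.Tendsto (fun n => u (φ n)) Filter.atTop (nhds (((d:ℝ):ℂ)⁻¹ • y)) := by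
    have h1 : Filter.Tendsto (fun n => ((d:ℝ):ℂ) • u (φ n)) Filter.atTop (nhds y) := by
      have h := hy.sub hqφ
      have h' := h.congr (f₁ := fun n => ((fun n => C (u n)) ∘ φ) n - (q ∘ φ) n)
        (fun n => by simp only [Function.comp_apply]; rw [hCu (φ n)]; try abel)
      simpa using h'
    have h2 := h1.const_smul (((d:ℝ):ℂ)⁻¹)
    have h3 := h2.congr (fun n => by rw [smul_smul, inv_mul_cancel₀ hd, one_smul])
    exact h3
  set x : H := (((d:ℝ):ℂ))⁻¹ • y with hxdef
  have hxnorm : ‖x‖ = 1 := by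
    have h1 : Filter.Tendsto (fun n => ‖u (φ n)‖) Filter.atTop (nhds ‖x‖) :=
      (continuous_norm.tendsto x).comp hux
    have h2 : Filter.Tendsto (fun n => ‖u (φ n)‖) Filter.atTop (nhds 1) := by
      simpa [hu1] using tendsto_const_nhds (x := (1:ℝ)) (f := Filter.atTop (α := ℕ))
    exact tendsto_nhds_unique h1 h2
  have hTx : T x = (s:ℂ) • x := by
    have h1 : Filter.Tendsto (fun n => T (u (φ n))) Filter.atTop (nhds (T x)) :=
      (T.continuous.tendsto x).comp hux
    have h2 : Filter.Tendsto (fun n => T (u (φ n))) Filter.atTop (nhds ((s:ℂ) • x)) := by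
      have h3 := hqφ.add (hux.const_smul ((s:ℂ)))
      have h4 := h3.congr (fun n => show (fun n => q (φ n)) n + (s:ℂ) • u (φ n)
          = T (u (φ n)) by simp [hqdef])
      simpa using h4
    exact tendsto_nhds_unique h1 h2
  refine ⟨x, ?_, hTx⟩
  intro h
  rw [h, norm_zero] at hxnorm
  exact one_ne_zero hxnorm.symm
end

section
/- (Accuracy of Ritz values from a perturbed Lanczos relation.) Let H be a nontrivial complex Hilbert space, T : H → H a bounded self-adjoint operator, and k ≥ 1 an integer. Let u₁, …, u_{k+1} ∈ H with ‖u_{k+1}‖ ≤ 1, let Δu₁, …, Δu_k ∈ H with ‖Δu_i‖ ≤ η for all i and some η ≥ 0, let β ≥ 0, and let M be a real k×k matrix such that for every i ∈ {1,…,k}: T u_i = Σ_{j=1}^{k} M_{j i} · u_j + (β · u_{k+1} if i = k, else 0) + Δu_i. Let μ ∈ ℝ and y ∈ ℝ^k with Σ_i y_i² = 1 and M y = μ y, and set z = Σ_{i=1}^{k} y_i · u_i. If z ≠ 0, then there exists λ in the real spectrum of T such that |μ − λ| ≤ ( β·|y_k| + √k · η ) / ‖z‖. -/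
open scoped ComplexConjugate

lemma aux_dist_spectrum
    {H : Type*} [NormedAddCommGroup H] [InnerProductSpace ℂ H] [CompleteSpace H]
    [Nontrivial H]
    (T : H →L[ℂ] H) (hT : IsSelfAdjoint T) (μ : ℝ) (z : H) :
    ∃ lam ∈ spectrum ℝ T, |μ - lam| * ‖z‖ ≤ ‖T z - (μ : ℂ) • z‖ := by
  have hne : (spectrum ℝ T).Nonempty := hT.spectrum_nonempty
  have hcpt : IsCompact (spectrum ℝ T) := spectrum.isCompact T
  obtain ⟨lam, hlam, hd⟩ := hcpt.exists_infDist_eq_dist hne μ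
  refine ⟨lam, hlam, ?_⟩
  set d : ℝ := |μ - lam| with hd'
  have hdd : d = Metric.infDist μ (spectrum ℝ T) := by
    rw [hd', ← Real.dist_eq, hd]
  rcases eq_or_lt_of_le (abs_nonneg (μ - lam)) with h0 | h0
  · rw [hd'.trans h0.symm, zero_mul]; exact norm_nonneg _
  -- d > 0
  have hdist : ∀ x ∈ spectrum ℝ T, d ≤ |x - μ| := by
    intro x hx
    rw [hdd, abs_sub_comm]
    simpa [Real.dist_eq] using Metric.infDist_le_dist_of_mem hx
  set g : ℝ → ℝ := fun x => (x - μ)⁻¹ with hg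
  have hgc : ContinuousOn g (spectrum ℝ T) := by
    apply ContinuousOn.inv₀
    · fun_prop
    · intro x hx
      have := hdist x hx
      intro hxeq
      rw [hxeq] at this
      simp at this
      exact absurd this (by linarith)
  have hmul : cfc g T * (T - algebraMap ℝ (H →L[ℂ] H) μ) = 1 := by
    have h1 : T - algebraMap ℝ (H →L[ℂ] H) μ = cfc (fun x : ℝ => x - μ) T := by
      rw [cfc_sub (fun x : ℝ => x) (fun _ => μ) T, cfc_id' ℝ T, cfc_const μ T]
    rw [h1, ← cfc_mul g (fun x => x - μ) T hgc (by fun_prop)]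
    rw [cfc_congr (g := fun _ => (1 : ℝ)) ?_, show cfc (fun _ : ℝ => (1:ℝ)) T = 1 by rw [cfc_const (1:ℝ) T, map_one]]
    intro x hx
    have hxne : x - μ ≠ 0 := by
      intro hxeq
      have := hdist x hx
      rw [hxeq] at this
      simp at this
      exact absurd this (by linarith)
    simp [g, inv_mul_cancel₀ hxne]
  have hz' : z = cfc g T ((T - algebraMap ℝ (H →L[ℂ] H) μ) z) := by
    have := congrArg (fun A : H →L[ℂ] H => A z) hmul
    simpa using this.symm
  have hnorm : ‖cfc g T‖ ≤ d⁻¹ := by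
    apply norm_cfc_le (by positivity)
    intro x hx
    rw [Real.norm_eq_abs, hg]
    rw [abs_inv]
    exact inv_anti₀ h0 (hdist x hx)
  have happ : (T - algebraMap ℝ (H →L[ℂ] H) μ) z = T z - (μ : ℂ) • z := by
    simp [Algebra.algebraMap_eq_smul_one, ContinuousLinearMap.smul_apply]
  have key : ‖z‖ ≤ d⁻¹ * ‖T z - (μ : ℂ) • z‖ := by
    calc ‖z‖ = ‖cfc g T ((T - algebraMap ℝ (H →L[ℂ] H) μ) z)‖ := by rw [← hz']
    _ ≤ ‖cfc g T‖ * ‖(T - algebraMap ℝ (H →L[ℂ] H) μ) z‖ := (cfc g T).le_opNorm _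
    _ ≤ d⁻¹ * ‖T z - (μ : ℂ) • z‖ := by
        rw [happ]; exact mul_le_mul_of_nonneg_right hnorm (norm_nonneg _)
  calc d * ‖z‖ ≤ d * (d⁻¹ * ‖T z - (μ : ℂ) • z‖) :=
        mul_le_mul_of_nonneg_left key (le_of_lt h0)
  _ = ‖T z - (μ : ℂ) • z‖ := by rw [← mul_assoc, mul_inv_cancel₀ (a := d) (ne_of_gt h0), one_mul]

/-- Accuracy of Ritz values from a perturbed Lanczos relation. -/
theorem ritz_value_accuracy_of_perturbed_lanczos
    (H : Type*) [NormedAddCommGroup H] [InnerProductSpace ℂ H] [CompleteSpace H]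
    [Nontrivial H]
    (T : H →L[ℂ] H) (hT : IsSelfAdjoint T)
    (k : ℕ) (hk : 1 ≤ k)
    (u : Fin k → H) (w : H) (hw : ‖w‖ ≤ 1)
    (Δu : Fin k → H) (η : ℝ) (hη : 0 ≤ η) (hΔu : ∀ i, ‖Δu i‖ ≤ η)
    (β : ℝ) (hβ : 0 ≤ β)
    (M : Matrix (Fin k) (Fin k) ℝ)
    (hM : ∀ i : Fin k, T (u i) =
      (∑ j : Fin k, (M j i : ℂ) • u j) +
        (if (i : ℕ) = k - 1 then (β : ℂ) • w else 0) + Δu i)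
    (μ : ℝ) (y : Fin k → ℝ) (hy : ∑ i, y i ^ 2 = 1)
    (hMy : M.mulVec y = μ • y)
    (z : H) (hzdef : z = ∑ i : Fin k, (y i : ℂ) • u i) (hz : z ≠ 0) :
    ∃ lam ∈ spectrum ℝ T,
      |μ - lam| ≤ (β * |y ⟨k - 1, by omega⟩| + Real.sqrt k * η) / ‖z‖ := by
  set last : Fin k := ⟨k - 1, by omega⟩ with hlast
  -- the residual
  have hres : T z - (μ : ℂ) • z = (y last : ℂ) • ((β : ℂ) • w) + ∑ i, (y i : ℂ) • Δu i := by
    have hTz : T z = (∑ i : Fin k, (y i : ℂ) • (∑ j : Fin k, (M j i : ℂ) • u j))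
        + (∑ i : Fin k, (y i : ℂ) • (if (i : ℕ) = k - 1 then (β : ℂ) • w else 0))
        + ∑ i, (y i : ℂ) • Δu i := by
      rw [hzdef, map_sum]
      simp only [map_smul, hM, smul_add, Finset.sum_add_distrib]
    have h1 : (∑ i : Fin k, (y i : ℂ) • (∑ j : Fin k, (M j i : ℂ) • u j)) = (μ : ℂ) • z := by
      simp only [Finset.smul_sum]
      rw [Finset.sum_comm, hzdef, Finset.smul_sum]
      refine Finset.sum_congr rfl fun j _ => ?_
      have hj : ∑ i : Fin k, M j i * y i = μ * y j := by
        have := congrFun hMy j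
        simpa [Matrix.mulVec, dotProduct] using this
      calc ∑ i : Fin k, (y i : ℂ) • ((M j i : ℂ) • u j)
          = ∑ i : Fin k, ((M j i * y i : ℝ) : ℂ) • u j :=
            Finset.sum_congr rfl fun i _ => by rw [smul_smul]; push_cast; ring_nf
      _ = ((∑ i : Fin k, M j i * y i : ℝ) : ℂ) • u j := by
            rw [show ((∑ i : Fin k, M j i * y i : ℝ) : ℂ)
                = ∑ i : Fin k, ((M j i * y i : ℝ) : ℂ) by push_cast; rfl, Finset.sum_smul]
      _ = (μ : ℂ) • ((y j : ℂ) • u j) := by rw [hj, smul_smul]; push_cast; ring_nf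
    have h2 : (∑ i : Fin k, (y i : ℂ) • (if (i : ℕ) = k - 1 then (β : ℂ) • w else 0))
        = (y last : ℂ) • ((β : ℂ) • w) := by
      have hcond : ∀ i : Fin k, ((i : ℕ) = k - 1) ↔ (i = last) := by
        intro i; rw [Fin.ext_iff]
      rw [Finset.sum_congr rfl (fun i _ => by rw [if_congr (hcond i) rfl rfl, smul_ite, smul_zero])]
      simp
    rw [hTz, h1, h2]; abel
  -- norm bound on the residual
  have hsum_abs : ∑ i, |y i| ≤ Real.sqrt k := by
    have h2' : (∑ i, |y i|) ^ 2 ≤ (k : ℝ) := by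
      calc (∑ i, |y i|) ^ 2 ≤ (Finset.univ.card : ℝ) * ∑ i, |y i| ^ 2 :=
            sq_sum_le_card_mul_sum_sq
      _ = (k : ℝ) * ∑ i, y i ^ 2 := by simp [sq_abs]
      _ = (k : ℝ) := by rw [hy, mul_one]
    nlinarith [Real.sq_sqrt (show (0:ℝ) ≤ (k:ℝ) by positivity), Real.sqrt_nonneg (k:ℝ),
      Finset.sum_nonneg (fun i (_ : i ∈ Finset.univ) => abs_nonneg (y i))]
  have hbound : ‖T z - (μ : ℂ) • z‖ ≤ β * |y last| + Real.sqrt k * η := by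
    rw [hres]
    calc ‖(y last : ℂ) • ((β : ℂ) • w) + ∑ i, (y i : ℂ) • Δu i‖
        ≤ ‖(y last : ℂ) • ((β : ℂ) • w)‖ + ‖∑ i, (y i : ℂ) • Δu i‖ := norm_add_le _ _
    _ ≤ |y last| * (β * ‖w‖) + ∑ i, |y i| * ‖Δu i‖ := by
        gcongr
        · rw [norm_smul, norm_smul]
          simp [abs_of_nonneg hβ]
        · refine (norm_sum_le _ _).trans ?_
          refine Finset.sum_le_sum fun i _ => ?_
          rw [norm_smul]; simp
    _ ≤ |y last| * (β * 1) + ∑ i, |y i| * η := by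
        gcongr with i
        exact hΔu i
    _ = β * |y last| + (∑ i, |y i|) * η := by rw [Finset.sum_mul]; ring
    _ ≤ β * |y last| + Real.sqrt k * η := by gcongr
  obtain ⟨lam, hlam, hle⟩ := aux_dist_spectrum T hT μ z
  refine ⟨lam, hlam, ?_⟩
  rw [le_div_iff₀ (norm_pos_iff.mpr hz)]
  exact hle.trans hbound
end
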